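/- arXiv:math/0507242 — 10 statements merged into one kernel-verified Lean document; each statement's English description precedes it below -/
import Mathlib

section
/- Let X be a proper metric space with base point x0, let A ⊆ X, and let τ ∈ ω^ω. Then the sets A and X \ V_τ(A) are asymptotically disjoint. -/
/-- Two subsets `A₁`, `A₂` of a metric space with base point `x0` are *asymptotically
disjoint* if `d(A₁ \ B_r(x0), A₂ \ B_r(x0)) → ∞` as `r → ∞`, i.e. for every `D > 0`
there is `r > 0` such that `dist a₁ a₂ ≥ D` for all `a₁ ∈ A₁ \ B_r(x0)`,
`a₂ ∈ A₂ \ B_r(x0)`. -/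
def AsympDisjoint {X : Type*} [MetricSpace X] (x0 : X) (A₁ A₂ : Set X) : Prop :=
  ∀ D : ℝ, 0 < D → ∃ r : ℝ, 0 < r ∧
    ∀ a₁ ∈ A₁ \ Metric.ball x0 r, ∀ a₂ ∈ A₂ \ Metric.ball x0 r, D ≤ dist a₁ a₂

/-- For `τ ∈ ω^ω` and `A ⊆ X`, `V_τ(A) = {y ∈ X : d(y,x0) ≥ τ(⌊d(y,A)⌋)}`.
(For the empty set `A` we have `d(y, ∅) = ∞`, so `V_τ(∅) = ∅`; this is recorded by
the `A.Nonempty` conjunct.) -/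
noncomputable def Vtau {X : Type*} [MetricSpace X] (x0 : X) (τ : ℕ → ℕ) (A : Set X) :
    Set X :=
  {y : X | A.Nonempty ∧ (τ ⌊Metric.infDist y A⌋₊ : ℝ) ≤ dist y x0}


/-- For every `A ⊆ X` and `τ ∈ ω^ω`, the sets `A` and `X \ V_τ(A)`
are asymptotically disjoint. -/
theorem asympDisjoint_compl_Vtau {X : Type*} [MetricSpace X] [ProperSpace X]
    (x0 : X) (A : Set X) (τ : ℕ → ℕ) (hτ : τ 0 = 0) :
    AsympDisjoint x0 A (Vtau x0 τ A)ᶜ := by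
  intro D hD
  rcases A.eq_empty_or_nonempty with hA | hA
  · exact ⟨1, one_pos, by simp [hA]⟩
  set M := Finset.sup (Finset.range (⌊D⌋₊ + 1)) τ with hM
  refine ⟨(M : ℝ) + 1, by positivity, ?_⟩
  rintro a₁ ⟨ha₁, -⟩ a₂ ⟨ha₂, hr₂⟩
  by_contra h
  push_neg at h
  have hinf : Metric.infDist a₂ A < D :=
    lt_of_le_of_lt (Metric.infDist_le_dist_of_mem ha₁) (by rwa [dist_comm])
  have hn : ⌊Metric.infDist a₂ A⌋₊ ≤ ⌊D⌋₊ := Nat.floor_le_floor hinf.le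
  have hτle : τ ⌊Metric.infDist a₂ A⌋₊ ≤ M :=
    Finset.le_sup (Finset.mem_range.mpr (Nat.lt_succ_of_le hn))
  have hlt : dist a₂ x0 < (τ ⌊Metric.infDist a₂ A⌋₊ : ℝ) := by
    by_contra hle
    exact ha₂ ⟨hA, not_lt.mp hle⟩
  have hge : (M : ℝ) + 1 ≤ dist a₂ x0 := not_lt.mp (by simpa [Metric.mem_ball] using hr₂)
  have hcast : (τ ⌊Metric.infDist a₂ A⌋₊ : ℝ) ≤ (M : ℝ) := by exact_mod_cast hτle
  linarith
end

section
/- Let X be a proper metric space with base point x0, and let A, C ⊆ X be asymptotically disjoint. Then there exist τ ∈ ω^ω and R > 0 such that (C \ B_R(x0)) ∩ V_τ(A) = ∅, i.e. C \ B_R(x0) ⊆ X \ V_τ(A). -/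
/-- If `A` and `C` are asymptotically disjoint subsets of a proper
metric space, then there are `τ ∈ ω^ω` and `R > 0` with `C \ B_R(x0) ⊆ X \ V_τ(A)`. -/
theorem exists_Vtau_compl_superset {X : Type*} [MetricSpace X] [ProperSpace X]
    (x0 : X) (A C : Set X) (h : AsympDisjoint x0 A C) :
    ∃ τ : ℕ → ℕ, τ 0 = 0 ∧ ∃ R : ℝ, 0 < R ∧
      C \ Metric.ball x0 R ⊆ (Vtau x0 τ A)ᶜ := by
  choose r hrpos hr using fun n : ℕ => h (n + 1) (by positivity)
  refine ⟨fun n => if n = 0 then 0 else ⌈r n + n + 1⌉₊, rfl, r 0 + 1,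
    by have := hrpos 0; linarith, ?_⟩
  rintro c ⟨hcC, hcB⟩ ⟨hA, hτ⟩
  set n := ⌊Metric.infDist c A⌋₊ with hn
  have hinf : Metric.infDist c A < n + 1 := Nat.lt_floor_add_one _
  obtain ⟨a, haA, hdca⟩ := (Metric.infDist_lt_iff hA).mp hinf
  have hcB' : ¬ dist c x0 < r 0 + 1 := fun hlt => hcB (Metric.mem_ball.mpr hlt)
  have hbig : r n + n + 1 ≤ dist c x0 := by
    rcases eq_or_ne n 0 with h0 | h0
    · rw [h0]; push_neg at hcB'; simpa using hcB'
    · simp only [h0, if_neg, if_false] at hτ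
      calc r n + n + 1 ≤ (⌈r n + n + 1⌉₊ : ℝ) := Nat.le_ceil _
        _ ≤ dist c x0 := hτ
  have hcball : c ∉ Metric.ball x0 (r n) := by
    intro hc
    rw [Metric.mem_ball] at hc
    have : (0:ℝ) ≤ (n:ℝ) := Nat.cast_nonneg n
    linarith
  by_cases ha : a ∈ Metric.ball x0 (r n)
  · rw [Metric.mem_ball] at ha
    have := dist_triangle c a x0
    linarith
  · have := hr n a ⟨haA, ha⟩ c ⟨hcC, hcball⟩
    rw [dist_comm] at this
    linarith
end

section
/- Let X be a proper metric space with base point x0, let f : X → [0,1] be slowly oscillating, and let 0 ≤ a < b ≤ 1. Then the sets f^{-1}([0,a]) and f^{-1}([b,1]) are asymptotically disjoint. -/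
/-- `f : X → ℝ` is *slowly oscillating* if for every `r > 0` and `ε > 0` there is
`D > 0` such that `diam f(B_r(x)) < ε` for every `x` with `d(x,x0) ≥ D`. -/
def SlowlyOscillating {X : Type*} [MetricSpace X] (x0 : X) (f : X → ℝ) : Prop :=
  ∀ r : ℝ, 0 < r → ∀ ε : ℝ, 0 < ε → ∃ D : ℝ, 0 < D ∧
    ∀ x : X, D ≤ dist x x0 → Metric.diam (f '' Metric.ball x r) < ε


/-- If `f : X → [0,1]` is slowly oscillating and `0 ≤ a < b ≤ 1`,
then `f⁻¹([0,a])` and `f⁻¹([b,1])` are asymptotically disjoint. -/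
theorem asympDisjoint_preimages {X : Type*} [MetricSpace X] [ProperSpace X]
    (x0 : X) (f : X → ℝ) (hf : ∀ x : X, f x ∈ Set.Icc (0 : ℝ) 1)
    (hso : SlowlyOscillating x0 f)
    (a b : ℝ) (ha : 0 ≤ a) (hab : a < b) (hb : b ≤ 1) :
    AsympDisjoint x0 (f ⁻¹' Set.Icc 0 a) (f ⁻¹' Set.Icc b 1) := by
  intro D hD
  obtain ⟨D₀, hD₀, hdiam⟩ := hso (D + 1) (by linarith) (b - a) (by linarith)
  refine ⟨D₀, hD₀, ?_⟩
  rintro a₁ ⟨ha₁, hb₁⟩ a₂ ⟨ha₂, hb₂⟩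
  by_contra h
  push_neg at h
  have hmem₁ : a₁ ∈ Metric.ball a₁ (D + 1) := Metric.mem_ball_self (by linarith)
  have hmem₂ : a₂ ∈ Metric.ball a₁ (D + 1) := by
    rw [Metric.mem_ball, dist_comm]; linarith
  have hdist : D₀ ≤ dist a₁ x0 := by
    simpa [Metric.mem_ball, not_lt] using hb₁
  have hbd : Bornology.IsBounded (f '' Metric.ball a₁ (D + 1)) := by
    refine (Metric.isBounded_Icc (0:ℝ) 1).subset ?_
    rintro _ ⟨x, -, rfl⟩; exact hf x
  have hle : dist (f a₁) (f a₂) ≤ Metric.diam (f '' Metric.ball a₁ (D + 1)) :=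
    Metric.dist_le_diam_of_mem hbd ⟨a₁, hmem₁, rfl⟩ ⟨a₂, hmem₂, rfl⟩
  have h1 : f a₁ ≤ a := ha₁.2
  have h2 : b ≤ f a₂ := ha₂.1
  have : b - a ≤ dist (f a₁) (f a₂) := by
    rw [Real.dist_eq, abs_sub_comm]
    calc b - a ≤ f a₂ - f a₁ := by linarith
    _ ≤ |f a₂ - f a₁| := le_abs_self _
  linarith [hdiam a₁ hdist]
end

section
/- Let X be a proper metric space with base point x0 and let X0 ⊆ X be an unbounded subset with x0 ∈ X0. For each j ∈ ℕ, the sets K_j = S(B_j(x0)) and X0 are asymptotically disjoint. -/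
/-- The layers of `X` with respect to `X0`: `X_0 = N_0(X0)` and
`X_i = N_i(X0) \ N_{i-1}(X0)` for `i ≥ 1`. -/
def layer {X : Type*} [MetricSpace X] (X0 : Set X) : ℕ → Set X
  | 0 => Metric.cthickening 0 X0
  | (i+1) => Metric.cthickening ((i : ℝ) + 1) X0 \ Metric.cthickening (i : ℝ) X0

/-- `S_k(M) = ⋃_{i ≥ 0} {x ∈ X_i : N_{k·i}(x) ∩ M ≠ ∅}`. -/
def Sset {X : Type*} [MetricSpace X] (X0 : Set X) (k : ℕ) (M : Set X) : Set X :=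
  ⋃ i : ℕ, {x ∈ layer X0 i | (Metric.closedBall x ((k : ℝ) * i) ∩ M).Nonempty}


/-- For an unbounded `X0 ⊆ X` containing the base point and any
`j ∈ ℕ`, the sets `K_j = S(B_j(x0))` and `X0` are asymptotically disjoint. -/
theorem asympDisjoint_Kj_X0 {X : Type*} [MetricSpace X] [ProperSpace X]
    (x0 : X) (X0 : Set X) (hX0 : ¬ Bornology.IsBounded X0) (hx0 : x0 ∈ X0) (j : ℕ) :
    AsympDisjoint x0 (Sset X0 1 (Metric.ball x0 (j : ℝ))) X0 := by
  intro D hD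
  refine ⟨D + j + 1, by positivity, ?_⟩
  rintro a₁ ⟨ha₁, hb₁⟩ a₂ ⟨ha₂, _⟩
  obtain ⟨i, hlayer, m, hm1, hm2⟩ := Set.mem_iUnion.1 ha₁
  -- dist a₁ x0 < i + j
  have hdx : dist a₁ x0 < (i : ℝ) + j := by
    have h1 : dist a₁ m ≤ (i : ℝ) := by
      have := Metric.mem_closedBall.1 hm1
      simpa [dist_comm] using this
    have h2 : dist m x0 < (j : ℝ) := Metric.mem_ball.1 hm2
    calc dist a₁ x0 ≤ dist a₁ m + dist m x0 := dist_triangle _ _ _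
      _ < (i : ℝ) + j := by linarith
  have hr : D + j + 1 ≤ dist a₁ x0 := by
    simpa [Metric.mem_ball, not_lt] using hb₁
  have hDi : D + 1 < (i : ℝ) := by linarith
  match i, hlayer, hDi with
  | 0, _, hDi => exact absurd hDi (by push_cast; linarith)
  | (i+1), hlayer, hDi =>
    have hnot : a₁ ∉ Metric.cthickening (i : ℝ) X0 := hlayer.2
    have hlt : (i : ℝ) < dist a₁ a₂ := by
      by_contra h
      push_neg at h
      exact hnot (Metric.mem_cthickening_of_dist_le a₁ a₂ _ X0 ha₂ h)
    push_cast at hDi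
    linarith
end

section
/- Let X0 be a kernel of a proper metric space X, let A ⊆ X0, and let Z ⊆ X0 be such that Z and X0 \ A are asymptotically disjoint. Then Z and the set S(X0 \ A) = ∪_{i≥0} {x ∈ X_i : N_i(x) ∩ (X0 \ A) ≠ ∅} are asymptotically disjoint. -/
/-- `X0` is a *kernel* of `X` witnessed by the sequence `k` if `X0` is unbounded,
contains the base point, `k i → ∞`, and every point `x` outside the closed
`i`-neighborhood `N_i(X0)` satisfies `B_{k i}(x) = {x}`. -/
def IsKernelWith {X : Type*} [MetricSpace X] (x0 : X) (X0 : Set X) (k : ℕ → ℕ) : Prop :=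
  ¬ Bornology.IsBounded X0 ∧ x0 ∈ X0 ∧ Filter.Tendsto k Filter.atTop Filter.atTop ∧
    ∀ i : ℕ, ∀ x : X, x ∉ Metric.cthickening (i : ℝ) X0 → Metric.ball x (k i : ℝ) = {x}

/-- `X0` is a *kernel* of `X`. -/
def IsKernel {X : Type*} [MetricSpace X] (x0 : X) (X0 : Set X) : Prop :=
  ∃ k : ℕ → ℕ, IsKernelWith x0 X0 k

/-- Let `X0` be a kernel of `X`, `A ⊆ X0`, and `Z ⊆ X0` with `Z`
and `X0 \ A` asymptotically disjoint. Then `Z` and `S(X0 \ A)` are asymptotically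
disjoint. -/
theorem asympDisjoint_S_of_asympDisjoint {X : Type*} [MetricSpace X] [ProperSpace X]
    (x0 : X) (X0 : Set X) (hk : IsKernel x0 X0) (A Z : Set X)
    (hA : A ⊆ X0) (hZ : Z ⊆ X0) (h : AsympDisjoint x0 Z (X0 \ A)) :
    AsympDisjoint x0 Z (Sset X0 1 (X0 \ A)) := by
  intro D hD
  obtain ⟨r', hr', hr'spec⟩ := h (2 * D + 1) (by linarith)
  refine ⟨r' + 2 * D + 1, by linarith, ?_⟩
  rintro z ⟨hzZ, hzball⟩ x ⟨hxS, hxball⟩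
  simp only [Metric.mem_ball, not_lt] at hzball hxball
  obtain ⟨i, hxlayer, m, hm, hmM⟩ : ∃ i, x ∈ layer X0 i ∧
      ∃ m, m ∈ Metric.closedBall x ((1 : ℝ) * i) ∧ m ∈ X0 \ A := by
    simpa [Sset, Set.mem_iUnion, Set.inter_nonempty] using hxS
  rw [Metric.mem_closedBall, one_mul] at hm
  -- hbig : (i : ℝ) - 1 ≤ dist z x
  have hbig : (i : ℝ) - 1 ≤ dist z x := by
    cases i with
    | zero =>
      have := dist_nonneg (x := z) (y := x)
      push_cast
      linarith
    | succ j =>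
      by_contra hlt
      push_neg at hlt
      have : x ∈ Metric.cthickening (j : ℝ) X0 := by
        apply Metric.mem_cthickening_of_dist_le x z _ _ (hZ hzZ)
        rw [dist_comm]
        push_cast at hlt ⊢
        linarith
      exact hxlayer.2 this
  have h1 : 2 * D + 1 - i ≤ dist z x := by
    by_cases hmb : m ∈ Metric.ball x0 r'
    · rw [Metric.mem_ball] at hmb
      have h2 : dist x0 x ≤ dist x0 m + dist m x := dist_triangle _ _ _
      have h3 : dist z x0 ≤ dist z x + dist x x0 := dist_triangle _ _ _
      have hc1 : dist x0 m = dist m x0 := dist_comm _ _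
      have hc2 : dist x x0 = dist x0 x := dist_comm _ _
      linarith
    · have := hr'spec z ⟨hzZ, by simp only [Metric.mem_ball, not_lt]; linarith⟩ m ⟨hmM, hmb⟩
      have h2 : dist z m ≤ dist z x + dist x m := dist_triangle _ _ _
      have hc : dist x m = dist m x := dist_comm _ _
      linarith
  linarith
end

section
/- Let X be a proper metric space with base point x0, let X0 ⊆ X be an unbounded subset with x0 ∈ X0, let L be a closed subset of X0, and let Z ⊆ X be such that Z and S_2(L) are asymptotically disjoint. Then the sets O(Z) and L are asymptotically disjoint. -/
/-- `O(Z) = {y ∈ X0 : ∃ i ≥ 0 and x ∈ X_i ∩ Z with d(y,x) ≤ i}`. -/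
def Oset {X : Type*} [MetricSpace X] (X0 Z : Set X) : Set X :=
  {y ∈ X0 | ∃ i : ℕ, ∃ x ∈ layer X0 i ∩ Z, dist y x ≤ (i : ℝ)}


/-- Let `X0 ⊆ X` be unbounded with `x0 ∈ X0`, let `L` be a closed
subset of `X0`, and let `Z ⊆ X` be asymptotically disjoint from `S_2(L)`. Then `O(Z)`
and `L` are asymptotically disjoint. -/
theorem asympDisjoint_Oset_L {X : Type*} [MetricSpace X] [ProperSpace X]
    (x0 : X) (X0 : Set X) (hX0 : ¬ Bornology.IsBounded X0) (hx0 : x0 ∈ X0)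
    (L : Set X) (hLX0 : L ⊆ X0) (hLclosed : IsClosed L)
    (Z : Set X) (h : AsympDisjoint x0 Z (Sset X0 2 L)) :
    AsympDisjoint x0 (Oset X0 Z) L := by
  intro D hD
  obtain ⟨r₀, hr₀, hr⟩ := h (2 * D) (by linarith)
  refine ⟨2 * r₀ + 2 * D + 2, by linarith, ?_⟩
  rintro y ⟨⟨hyX0, i, x, ⟨hxlayer, hxZ⟩, hyx⟩, hy⟩ ℓ ⟨hℓL, hℓ⟩
  by_contra hcon
  push_neg at hcon
  have hy' : 2 * r₀ + 2 * D + 2 ≤ dist y x0 := by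
    simpa [Metric.mem_ball, not_lt] using hy
  have hℓ' : 2 * r₀ + 2 * D + 2 ≤ dist ℓ x0 := by
    simpa [Metric.mem_ball, not_lt] using hℓ
  have hℓS : ℓ ∈ Sset X0 2 L := by
    refine Set.mem_iUnion.mpr ⟨0, ?_, ⟨ℓ, ?_, hℓL⟩⟩
    · show ℓ ∈ Metric.cthickening 0 X0
      exact Metric.self_subset_cthickening _ (hLX0 hℓL)
    simp [Metric.mem_closedBall]
  by_cases hiD : (i : ℝ) < D
  · -- small layer: x is close to ℓ, contradicting asymptotic disjointness of Z and S₂(L)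
    have hxℓ : dist x ℓ < 2 * D := by
      have t1 : dist x ℓ ≤ dist x y + dist y ℓ := dist_triangle _ _ _
      have : dist x y ≤ (i : ℝ) := by rwa [dist_comm]
      linarith
    have t2 : dist ℓ x0 ≤ dist ℓ x + dist x x0 := dist_triangle _ _ _
    have hxx0 : r₀ ≤ dist x x0 := by
      have : dist ℓ x = dist x ℓ := dist_comm _ _
      linarith
    have := hr x ⟨hxZ, by simp [Metric.mem_ball]; linarith⟩
      ℓ ⟨hℓS, by simp [Metric.mem_ball]; linarith⟩
    linarith
  · push_neg at hiD
    obtain ⟨j, rfl⟩ : ∃ j, i = j + 1 := by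
      cases i with
      | zero => exact absurd hiD (by simpa using hD)
      | succ j => exact ⟨j, rfl⟩
    have hij : ((j : ℝ) + 1 : ℝ) = ((j + 1 : ℕ) : ℝ) := by push_cast; ring
    have hyx' : dist y x ≤ (j : ℝ) + 1 := by rw [hij]; exact hyx
    have hiD' : D ≤ (j : ℝ) + 1 := by rw [hij]; exact hiD
    have hxnot : x ∉ Metric.cthickening (j : ℝ) X0 := hxlayer.2
    have hxx0' : (j : ℝ) < dist x x0 := by
      by_contra hle
      push_neg at hle
      exact hxnot (Metric.mem_cthickening_of_dist_le x x0 _ X0 hx0 hle)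
    have hxℓ : dist x ℓ ≤ 2 * ((j : ℝ) + 1) := by
      have t1 : dist x ℓ ≤ dist x y + dist y ℓ := dist_triangle _ _ _
      have : dist x y ≤ (j : ℝ) + 1 := by rwa [dist_comm]
      linarith
    have hxS : x ∈ Sset X0 2 L := by
      refine Set.mem_iUnion.mpr ⟨j + 1, hxlayer, ⟨ℓ, ?_, hℓL⟩⟩
      rw [Metric.mem_closedBall, dist_comm]
      push_cast
      linarith
    have hxx0 : r₀ ≤ dist x x0 := by
      have t3 : dist y x0 ≤ dist y x + dist x x0 := dist_triangle _ _ _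
      linarith
    have := hr x ⟨hxZ, by simp [Metric.mem_ball]; linarith⟩
      x ⟨hxS, by simp [Metric.mem_ball]; linarith⟩
    simp at this
    linarith
end

section
/- Let X0 be a kernel of a proper metric space X, let L ⊆ X0 be closed in X and unbounded, and let τ ∈ ω^ω. Then L is a kernel of the subspace Y = S_2(L) ∩ V_τ(X0) (with the induced metric); explicitly, L ⊆ Y and there is a sequence (k'_j) of natural numbers with k'_j → ∞ such that for every j ≥ 0 and every x ∈ Y with d(x,L) > j, the only point y ∈ Y with d(x,y) < k'_j is x itself. -/
/-- Let `X0` be a kernel of `X`, let `L ⊆ X0` be closed in `X` and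
unbounded, and let `τ ∈ ω^ω`. Then `L` is a kernel of `Y = S_2(L) ∩ V_τ(X0)`:
`L ⊆ Y` and there is a sequence `k' i → ∞` such that for every `j` and every `x ∈ Y`
with `d(x,L) > j`, the only `y ∈ Y` with `d(x,y) < k' j` is `x` itself. -/
theorem kernel_S2_inter_Vtau {X : Type*} [MetricSpace X] [ProperSpace X]
    (x0 : X) (X0 : Set X) (hk : IsKernel x0 X0) (L : Set X) (hL : L ⊆ X0)
    (hLclosed : IsClosed L) (hLunbdd : ¬ Bornology.IsBounded L)
    (τ : ℕ → ℕ) (hτ : τ 0 = 0) :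
    L ⊆ Sset X0 2 L ∩ Vtau x0 τ X0 ∧
    ∃ k' : ℕ → ℕ, Filter.Tendsto k' Filter.atTop Filter.atTop ∧
      ∀ j : ℕ, ∀ x ∈ Sset X0 2 L ∩ Vtau x0 τ X0, (j : ℝ) < Metric.infDist x L →
        ∀ y ∈ Sset X0 2 L ∩ Vtau x0 τ X0, dist x y < (k' j : ℝ) → y = x := by
  obtain ⟨k, hkunb, hx0, hktend, hkball⟩ := hk
  constructor
  · intro x hx
    constructor
    · refine Set.mem_iUnion.2 ⟨0, ?_, ⟨x, ?_, hx⟩⟩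
      · exact Metric.self_subset_cthickening X0 (hL hx)
      · simp
    · refine ⟨⟨x, hL hx⟩, ?_⟩
      rw [Metric.infDist_zero_of_mem (hL hx)]
      simp [hτ, dist_nonneg]
  · refine ⟨fun j => sInf (k '' Set.Ici (j / 2)), ?_, ?_⟩
    · rw [Filter.tendsto_atTop]
      intro b
      have hM' := (Filter.tendsto_atTop.1 hktend) b
      rw [Filter.eventually_atTop] at hM'
      obtain ⟨M, hM⟩ := hM'
      filter_upwards [Filter.eventually_ge_atTop (2 * M)] with j hj
      refine le_csInf ⟨k (j / 2), ⟨j / 2, Set.self_mem_Ici, rfl⟩⟩ ?_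
      rintro _ ⟨m, hm, rfl⟩
      exact hM m (le_trans (by omega) hm)
    · intro j x hx hdist y hy hxy
      obtain ⟨i, hi⟩ := Set.mem_iUnion.1 hx.1
      obtain ⟨hlayer, z, hz⟩ := hi
      have hzd : Metric.infDist x L ≤ (2 : ℝ) * i := by
        calc Metric.infDist x L ≤ dist x z := Metric.infDist_le_dist_of_mem hz.2
        _ = dist z x := dist_comm x z
        _ ≤ (2 : ℝ) * i := by
            have := Metric.mem_closedBall.1 hz.1
            push_cast at this ⊢
            linarith
      have hji : j < 2 * i := by
        have : (j : ℝ) < 2 * i := lt_of_lt_of_le hdist hzd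
        exact_mod_cast this
      obtain ⟨n, rfl⟩ : ∃ n, i = n + 1 := ⟨i - 1, by omega⟩
      · simp only [layer] at hlayer
        have hnot : x ∉ Metric.cthickening (n : ℝ) X0 := hlayer.2
        have hball := hkball n x hnot
        have hle : sInf (k '' Set.Ici (j / 2)) ≤ k n :=
          Nat.sInf_le ⟨n, Set.mem_Ici.2 (by omega), rfl⟩
        have : y ∈ Metric.ball x (k n : ℝ) := by
          rw [Metric.mem_ball, dist_comm]
          exact lt_of_lt_of_le hxy (by exact_mod_cast hle)
        rw [hball] at this
        exact this
end

section
/- Let X be a proper metric space, let C ⊆ X be unbounded with base point x0 ∈ C, and let Z ⊆ X. Define D_0 = C and, for k ≥ 1, D_k = (N_k(C) ∩ Z) \ B_k(∪_{i=0}^{k-1} D_i). For each k ≥ 1 let L_k ⊆ D_k be a set such that d(x,y) ≥ k for all distinct x, y ∈ L_k and such that for every x ∈ D_k there is y ∈ L_k with d(x,y) ≤ k, and put L = ∪_{k≥1} L_k. Then C is a kernel of the subspace C ∪ L (with the induced metric); explicitly, for every j ≥ 0 and every x ∈ (C ∪ L) \ N_j(C), every point y ∈ C ∪ L with y ≠ x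 satisfies d(x,y) ≥ j + 1. -/
/-- Let `C ⊆ X` be unbounded with base point `x0 ∈ C` and `Z ⊆ X`.
Let `D_0 = C`, `D_k = (N_k(C) ∩ Z) \ B_k(∪_{i<k} D_i)` for `k ≥ 1`, and for `k ≥ 1`
let `L_k ⊆ D_k` be `k`-discrete and `k`-dense in `D_k`; put `L = ∪_{k≥1} L_k`. Then
`C` is a kernel of `C ∪ L`: for every `j ≥ 0` and `x ∈ (C ∪ L) \ N_j(C)`, every
`y ∈ C ∪ L` with `y ≠ x` satisfies `d(x,y) ≥ j + 1`. -/
theorem kernel_of_discretization {X : Type*} [MetricSpace X] [ProperSpace X]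
    (x0 : X) (C Z : Set X) (hC : ¬ Bornology.IsBounded C) (hx0 : x0 ∈ C)
    (D : ℕ → Set X) (hD0 : D 0 = C)
    (hDk : ∀ k : ℕ, D (k + 1) =
      (Metric.cthickening ((k : ℝ) + 1) C ∩ Z) \
        Metric.thickening ((k : ℝ) + 1) (⋃ i ∈ Finset.range (k + 1), D i))
    (L : ℕ → Set X)
    (hLD : ∀ k : ℕ, L (k + 1) ⊆ D (k + 1))
    (hLdisc : ∀ k : ℕ, ∀ x ∈ L (k + 1), ∀ y ∈ L (k + 1), x ≠ y →
      ((k : ℝ) + 1) ≤ dist x y)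
    (hLnet : ∀ k : ℕ, ∀ x ∈ D (k + 1), ∃ y ∈ L (k + 1), dist x y ≤ (k : ℝ) + 1) :
    ∀ j : ℕ, ∀ x ∈ C ∪ ⋃ k : ℕ, L (k + 1), x ∉ Metric.cthickening (j : ℝ) C →
      ∀ y ∈ C ∪ ⋃ k : ℕ, L (k + 1), y ≠ x → (j : ℝ) + 1 ≤ dist x y := by
  intro j x hx hxj y hy hyx
  have hxC : x ∉ C := fun h => hxj (Metric.self_subset_cthickening C h)
  rcases hx with hx | hx
  · exact absurd hx hxC
  obtain ⟨m, hm⟩ := Set.mem_iUnion.mp hx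
  have hxD : x ∈ D (m + 1) := hLD m hm
  -- key: a ∈ D (n+1), b ∈ D i with i < n+1 implies n+1 ≤ dist a b
  have key : ∀ a b : X, ∀ n i : ℕ, a ∈ D (n + 1) → i < n + 1 → b ∈ D i →
      (n : ℝ) + 1 ≤ dist a b := by
    intro a b n i ha hi hb
    rw [hDk n] at ha
    by_contra h
    push_neg at h
    exact ha.2 (Metric.mem_thickening_iff.mpr
      ⟨b, Set.mem_iUnion₂.mpr ⟨i, Finset.mem_range.mpr hi, hb⟩, h⟩)
  have hxCd : ∀ z ∈ C, (m : ℝ) + 1 ≤ dist x z := by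
    intro z hz
    exact key x z m 0 hxD (Nat.succ_pos m) (hD0 ▸ hz)
  have hjm : (j : ℝ) < (m : ℝ) + 1 := by
    by_contra h
    push_neg at h
    have hxc : x ∈ Metric.cthickening ((m : ℝ) + 1) C := by
      rw [hDk m] at hxD; exact hxD.1.1
    exact hxj (Metric.cthickening_mono h C hxc)
  have hjm' : (j : ℝ) + 1 ≤ (m : ℝ) + 1 := by
    have : j < m + 1 := by exact_mod_cast hjm
    have : j ≤ m := Nat.lt_succ_iff.mp this
    have : (j : ℝ) ≤ (m : ℝ) := by exact_mod_cast this
    linarith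
  rcases hy with hy | hy
  · exact le_trans hjm' (hxCd y hy)
  obtain ⟨k, hk⟩ := Set.mem_iUnion.mp hy
  rcases lt_trichotomy k m with hkm | hkm | hkm
  · -- k < m : y ∈ D (k+1), k+1 < m+1
    have := key x y m (k + 1) hxD (Nat.succ_lt_succ hkm) (hLD k hk)
    linarith
  · subst hkm
    have := hLdisc k x hm y hk (Ne.symm hyx)
    linarith
  · -- m < k : x ∈ D (m+1), m+1 < k+1
    have := key y x k (m + 1) (hLD k hk) (Nat.succ_lt_succ hkm) hxD
    have hk' : (m : ℝ) + 1 ≤ (k : ℝ) + 1 := by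
      have : (m : ℝ) ≤ (k : ℝ) := by exact_mod_cast hkm.le
      linarith
    rw [dist_comm]
    linarith
end

section
/- Let X be a proper metric space with base point x0, and let (L_i)_{i≥1} and (W_i)_{i≥1} be sequences of subsets of X such that W_1 ⊇ W_2 ⊇ W_3 ⊇ ⋯, L_{i+1} ⊆ W_i for every i ≥ 1, and L_i and W_i are asymptotically disjoint for every i ≥ 1. Then the family {L_i : i ≥ 1} is asymptotically discrete. -/
/-- If `W 0 ⊇ W 1 ⊇ ⋯`, `L (i+1) ⊆ W i` for every `i`, and `L i`
and `W i` are asymptotically disjoint for every `i`, then the family `{L i}` is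
asymptotically discrete: each `L i` is asymptotically disjoint from `⋃_{j ≠ i} L j`. -/
theorem asympDiscrete_of_nested {X : Type*} [MetricSpace X] [ProperSpace X]
    (x0 : X) (L W : ℕ → Set X)
    (hW : ∀ i : ℕ, W (i + 1) ⊆ W i)
    (hLW : ∀ i : ℕ, L (i + 1) ⊆ W i)
    (hdisj : ∀ i : ℕ, AsympDisjoint x0 (L i) (W i)) :
    ∀ i : ℕ, AsympDisjoint x0 (L i) (⋃ (j : ℕ) (_ : j ≠ i), L j) := by
  -- W is antitone
  have hWmono : ∀ a b : ℕ, a ≤ b → W b ⊆ W a := by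
    intro a b hab
    induction b, hab using Nat.le_induction with
    | base => exact le_refl _
    | succ n hn ih => exact (hW n).trans ih
  have hLsub : ∀ a b : ℕ, a < b → L b ⊆ W a := by
    intro a b hab
    obtain ⟨k, rfl⟩ := Nat.exists_eq_add_of_lt hab
    calc L (a + k + 1) ⊆ W (a + k) := hLW _
      _ ⊆ W a := hWmono _ _ (Nat.le_add_right _ _)
  intro i D hD
  -- choose radii
  choose f hf1 hf2 using fun j => hdisj j D hD
  set r : ℝ := 1 + ∑ j ∈ Finset.range (i + 1), |f j| with hr
  have hrpos : 0 < r := by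
    have : 0 ≤ ∑ j ∈ Finset.range (i + 1), |f j| :=
      Finset.sum_nonneg fun j _ => abs_nonneg _
    linarith
  have hfr : ∀ j ≤ i, f j ≤ r := by
    intro j hj
    have h1 : |f j| ≤ ∑ k ∈ Finset.range (i + 1), |f k| :=
      Finset.single_le_sum (f := fun k => |f k|) (fun k _ => abs_nonneg _)
        (Finset.mem_range.mpr (Nat.lt_succ_of_le hj))
    have := le_abs_self (f j)
    linarith
  have hball : ∀ j ≤ i, Metric.ball x0 (f j) ⊆ Metric.ball x0 r :=
    fun j hj => Metric.ball_subset_ball (hfr j hj)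
  refine ⟨r, hrpos, ?_⟩
  rintro a₁ ⟨ha₁, ha₁b⟩ a₂ ⟨ha₂, ha₂b⟩
  simp only [Set.mem_iUnion] at ha₂
  obtain ⟨j, hji, hja₂⟩ := ha₂
  rcases lt_or_gt_of_ne hji with hlt | hgt
  · -- j < i : a₁ ∈ L i ⊆ W j, use hdisj j with roles swapped
    have hrj : f j ≤ r := hfr j (le_of_lt hlt)
    have h := hf2 j a₂ ⟨hja₂, fun h => ha₂b (hball j hlt.le h)⟩
      a₁ ⟨hLsub j i hlt ha₁, fun h => ha₁b (hball j hlt.le h)⟩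
    rwa [dist_comm] at h
  · -- j > i : a₂ ∈ L j ⊆ W i
    exact hf2 i a₁ ⟨ha₁, fun h => ha₁b (hball i le_rfl h)⟩
      a₂ ⟨hLsub i j hgt hja₂, fun h => ha₂b (hball i le_rfl h)⟩
end

section
/- Let X be a proper metric space with base point x0, let {X_i : i ∈ ℕ} be an asymptotically discrete family of subsets of X, and for each i let A_i, B_i ⊆ X_i be asymptotically disjoint. Then there exists a sequence of radii (s_i) such that, setting C_i = A_i \ B_{s_i}(x0) and D_i = B_i \ B_{s_i}(x0), one has d(C_i, ∪_{j=1}^{i} D_j) ≥ i and d(D_i, ∪_{j=1}^{i} C_j) ≥ i for every i ∈ ℕ, and the sets C = ∪_{i=1}^{∞} C_i and D = ∪_{i=1}^{∞} D_i are asymptotically disjoint. -/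
/-- Let `{X i}` be an asymptotically discrete family and for each
`i` let `A i, B i ⊆ X i` be asymptotically disjoint. Then there are radii `s i` such
that, with `C i = A i \ B_{s i}(x0)` and `D i = B i \ B_{s i}(x0)`, one has
`d(C i, ∪_{j ≤ i} D j) ≥ i` and `d(D i, ∪_{j ≤ i} C j) ≥ i` for every `i`, and
`C = ⋃ i, C i` and `D = ⋃ i, D i` are asymptotically disjoint. -/
theorem exists_truncation_asympDisjoint {X : Type*} [MetricSpace X] [ProperSpace X]
    (x0 : X) (Xi A B : ℕ → Set X)
    (hdiscrete : ∀ i : ℕ, AsympDisjoint x0 (Xi i) (⋃ (j : ℕ) (_ : j ≠ i), Xi j))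
    (hA : ∀ i : ℕ, A i ⊆ Xi i) (hB : ∀ i : ℕ, B i ⊆ Xi i)
    (hAB : ∀ i : ℕ, AsympDisjoint x0 (A i) (B i)) :
    ∃ s : ℕ → ℝ,
      (∀ i : ℕ, ∀ c ∈ A i \ Metric.ball x0 (s i), ∀ j : ℕ, j ≤ i →
        ∀ d ∈ B j \ Metric.ball x0 (s j), (i : ℝ) ≤ dist c d) ∧
      (∀ i : ℕ, ∀ d ∈ B i \ Metric.ball x0 (s i), ∀ j : ℕ, j ≤ i →
        ∀ c ∈ A j \ Metric.ball x0 (s j), (i : ℝ) ≤ dist d c) ∧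
      AsympDisjoint x0 (⋃ i : ℕ, A i \ Metric.ball x0 (s i))
        (⋃ i : ℕ, B i \ Metric.ball x0 (s i)) := by

  choose r1 hr1pos hr1 using fun i : ℕ => hdiscrete i ((i : ℝ) + 1) (by positivity)
  choose r2 hr2pos hr2 using fun i : ℕ => hAB i ((i : ℝ) + 1) (by positivity)
  set s : ℕ → ℝ := fun i => max (r1 i) (r2 i) + i with hs
  have hsmax : ∀ i, max (r1 i) (r2 i) ≤ s i := fun i =>
    le_add_of_nonneg_right (Nat.cast_nonneg i)
  have key1 : ∀ i : ℕ, ∀ c ∈ A i \ Metric.ball x0 (s i), ∀ j : ℕ, j ≤ i →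
      ∀ d ∈ B j \ Metric.ball x0 (s j), (i : ℝ) ≤ dist c d := by
    intro i c hc j hj d hd
    have hcx : s i ≤ dist c x0 := not_lt.1 (by simpa [Metric.mem_ball] using hc.2)
    by_cases hdx : dist d x0 < max (r1 i) (r2 i)
    · have htri : dist c x0 ≤ dist c d + dist d x0 := dist_triangle c d x0
      have : s i = max (r1 i) (r2 i) + i := rfl
      linarith
    · push_neg at hdx
      have hr1le : r1 i ≤ max (r1 i) (r2 i) := le_max_left _ _
      have hr2le : r2 i ≤ max (r1 i) (r2 i) := le_max_right _ _
      have hc1 : c ∉ Metric.ball x0 (r1 i) := by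
        simp only [Metric.mem_ball, not_lt]; linarith [hsmax i]
      have hc2 : c ∉ Metric.ball x0 (r2 i) := by
        simp only [Metric.mem_ball, not_lt]; linarith [hsmax i]
      have hd1 : d ∉ Metric.ball x0 (r1 i) := by
        simp only [Metric.mem_ball, not_lt]; linarith
      have hd2 : d ∉ Metric.ball x0 (r2 i) := by
        simp only [Metric.mem_ball, not_lt]; linarith
      rcases lt_or_eq_of_le hj with hlt | heq
      · have := hr1 i c ⟨hA i hc.1, hc1⟩ d
          ⟨Set.mem_iUnion.2 ⟨j, Set.mem_iUnion.2 ⟨Nat.ne_of_lt hlt, hB j hd.1⟩⟩, hd1⟩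
        linarith
      · subst heq
        have := hr2 j c ⟨hc.1, hc2⟩ d ⟨hd.1, hd2⟩
        linarith
  have key2 : ∀ i : ℕ, ∀ d ∈ B i \ Metric.ball x0 (s i), ∀ j : ℕ, j ≤ i →
      ∀ c ∈ A j \ Metric.ball x0 (s j), (i : ℝ) ≤ dist d c := by
    intro i d hd j hj c hc
    have hdx' : s i ≤ dist d x0 := not_lt.1 (by simpa [Metric.mem_ball] using hd.2)
    by_cases hcx : dist c x0 < max (r1 i) (r2 i)
    · have htri : dist d x0 ≤ dist d c + dist c x0 := dist_triangle d c x0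
      have : s i = max (r1 i) (r2 i) + i := rfl
      linarith
    · push_neg at hcx
      have hr1le : r1 i ≤ max (r1 i) (r2 i) := le_max_left _ _
      have hr2le : r2 i ≤ max (r1 i) (r2 i) := le_max_right _ _
      have hd1 : d ∉ Metric.ball x0 (r1 i) := by
        simp only [Metric.mem_ball, not_lt]; linarith [hsmax i]
      have hd2 : d ∉ Metric.ball x0 (r2 i) := by
        simp only [Metric.mem_ball, not_lt]; linarith [hsmax i]
      have hc1 : c ∉ Metric.ball x0 (r1 i) := by
        simp only [Metric.mem_ball, not_lt]; linarith
      have hc2 : c ∉ Metric.ball x0 (r2 i) := by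
        simp only [Metric.mem_ball, not_lt]; linarith
      rcases lt_or_eq_of_le hj with hlt | heq
      · have := hr1 i d ⟨hB i hd.1, hd1⟩ c
          ⟨Set.mem_iUnion.2 ⟨j, Set.mem_iUnion.2 ⟨Nat.ne_of_lt hlt, hA j hc.1⟩⟩, hc1⟩
        linarith
      · subst heq
        have := hr2 j c ⟨hc.1, hc2⟩ d ⟨hd.1, hd2⟩
        rw [dist_comm]
        linarith
  refine ⟨s, key1, key2, ?_⟩
  intro D hD
  have hpair : ∀ i j : ℕ, ∃ r : ℝ, 0 < r ∧
      ∀ c ∈ A i \ Metric.ball x0 r, ∀ d ∈ B j \ Metric.ball x0 r, D ≤ dist c d := by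
    intro i j
    by_cases h : i = j
    · subst h; exact hAB i D hD
    · obtain ⟨r, hr, H⟩ := hdiscrete i D hD
      refine ⟨r, hr, fun c hc d hd => ?_⟩
      exact H c ⟨hA i hc.1, hc.2⟩ d
        ⟨Set.mem_iUnion.2 ⟨j, Set.mem_iUnion.2 ⟨fun hji => h hji.symm, hB j hd.1⟩⟩, hd.2⟩
  choose ρ hρpos hρ using hpair
  set N := ⌈D⌉₊ with hN
  set r : ℝ := 1 + ∑ i ∈ Finset.range N, ∑ j ∈ Finset.range N, |ρ i j| with hr
  have hrpos : 0 < r := by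
    have : (0:ℝ) ≤ ∑ i ∈ Finset.range N, ∑ j ∈ Finset.range N, |ρ i j| :=
      Finset.sum_nonneg fun _ _ => Finset.sum_nonneg fun _ _ => abs_nonneg _
    linarith
  refine ⟨r, hrpos, ?_⟩
  intro a ha b hb
  obtain ⟨haU, har⟩ := ha
  obtain ⟨hbU, hbr⟩ := hb
  obtain ⟨i, hai⟩ := Set.mem_iUnion.1 haU
  obtain ⟨j, hbj⟩ := Set.mem_iUnion.1 hbU
  by_cases hsmall : (i : ℝ) < D ∧ (j : ℝ) < D
  · have hiN : i ∈ Finset.range N := Finset.mem_range.2 (Nat.lt_ceil.2 hsmall.1)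
    have hjN : j ∈ Finset.range N := Finset.mem_range.2 (Nat.lt_ceil.2 hsmall.2)
    have hρr : ρ i j ≤ r := by
      calc ρ i j ≤ |ρ i j| := le_abs_self _
        _ ≤ ∑ j' ∈ Finset.range N, |ρ i j'| :=
          Finset.single_le_sum (f := fun j' => |ρ i j'|) (fun _ _ => abs_nonneg _) hjN
        _ ≤ ∑ i' ∈ Finset.range N, ∑ j' ∈ Finset.range N, |ρ i' j'| :=
          Finset.single_le_sum (f := fun i' => ∑ j' ∈ Finset.range N, |ρ i' j'|)
            (fun _ _ => Finset.sum_nonneg fun _ _ => abs_nonneg _) hiN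
        _ ≤ r := by rw [hr]; linarith
    have ha' : a ∉ Metric.ball x0 (ρ i j) := fun h => har (Metric.ball_subset_ball hρr h)
    have hb' : b ∉ Metric.ball x0 (ρ i j) := fun h => hbr (Metric.ball_subset_ball hρr h)
    exact hρ i j a ⟨hai.1, ha'⟩ b ⟨hbj.1, hb'⟩
  · push_neg at hsmall
    rcases le_total j i with hji | hij
    · have hDi : D ≤ (i : ℝ) := by
        rcases lt_or_ge (i : ℝ) D with h | h
        · exact absurd (le_trans (hsmall h) (Nat.cast_le.2 hji)) (not_le.2 h)
        · exact h
      exact hDi.trans (key1 i a hai j hji b hbj)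
    · have hDj : D ≤ (j : ℝ) := by
        rcases lt_or_ge (j : ℝ) D with h | h
        · rcases lt_or_ge (i : ℝ) D with h' | h'
          · exact absurd (hsmall h') (not_le.2 h)
          · exact absurd (h'.trans (Nat.cast_le.2 hij)) (not_le.2 h)
        · exact h
      rw [dist_comm]
      exact hDj.trans (key2 j b hbj i hij a hai)
end
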